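/- arXiv:2109.01035 — 3 statements merged into one kernel-verified Lean document; each statement's English description precedes it below -/
import Mathlib

section
/- Let m ∈ ℕ, m ≥ 1, and let α > π(m−1). Then (α^m/m!) · ∫_1^∞ c̃_{1,(m+1)/2} (y²−1)^{−(m+1)/2} · exp{ −(α/π) ∫_y^∞ (t²−1)^{−1} dt } dy = (α^m Γ((m+1)/2))/(m·2^m·√π·Γ(m/2)) · Γ(α/(2π) − (m−1)/2)/Γ(α/(2π) + (m+1)/2), where c̃_{1,(m+1)/2} = Γ((m+1)/2)/(√π Γ(m/2)). -/
/-!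
The inner integral is `(log (y + 1) - log (y - 1)) / 2`, so the exponential factor equals
`((y - 1) / (y + 1)) ^ (α / (2π))` and the integrand becomes `(y - 1) ^ (a - 1) * (y + 1) ^ (-(a + m))`
with `a = α / (2π) - (m - 1) / 2`, which is positive exactly when `α > π (m - 1)`. The substitution
`y = (1 + u) / (1 - u)` turns this into `2 ^ (-m)` times Euler's Beta integral `B(a, m)`, and
`m! = m Γ(m)` leaves the stated constant.
-/

open MeasureTheory Real Set Filter Topology

theorem integral_Ioo_rpow_mul_one_sub_rpow {a b : ℝ} (ha : 0 < a) (hb : 0 < b) :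
    ∫ u in Ioo (0 : ℝ) 1, u ^ (a - 1) * (1 - u) ^ (b - 1) = Gamma a * Gamma b / Gamma (a + b) := by
  have hΓ := Complex.Gamma_mul_Gamma_eq_betaIntegral (s := (a : ℂ)) (t := (b : ℂ))
    (by simpa using ha) (by simpa using hb)
  have hbeta : Complex.betaIntegral a b =
      ((∫ u in (0 : ℝ)..1, u ^ (a - 1) * (1 - u) ^ (b - 1) : ℝ) : ℂ) := by
    rw [Complex.betaIntegral, ← intervalIntegral.integral_ofReal]
    refine intervalIntegral.integral_congr fun u hu => ?_
    rw [uIcc_of_le zero_le_one] at hu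
    push_cast
    rw [Complex.ofReal_cpow hu.1, Complex.ofReal_cpow (sub_nonneg.2 hu.2)]
    push_cast
    ring
  rw [hbeta, ← Complex.ofReal_add, Complex.Gamma_ofReal, Complex.Gamma_ofReal,
    Complex.Gamma_ofReal, ← Complex.ofReal_mul, ← Complex.ofReal_mul] at hΓ
  rw [eq_div_iff (Gamma_pos_of_pos (add_pos ha hb)).ne', mul_comm, Complex.ofReal_injective hΓ,
    intervalIntegral.integral_of_le zero_le_one, integral_Ioc_eq_integral_Ioo]

theorem image_Ioo_one_add_div_one_sub :
    (fun u : ℝ => (1 + u) / (1 - u)) '' Ioo 0 1 = Ioi 1 := by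
  ext y
  constructor
  · rintro ⟨u, ⟨hu0, hu1⟩, rfl⟩
    rw [mem_Ioi, lt_div_iff₀ (by linarith)]
    linarith
  · intro hy
    rw [mem_Ioi] at hy
    refine ⟨(y - 1) / (y + 1), ⟨by apply div_pos <;> linarith, by rw [div_lt_one] <;> linarith⟩, ?_⟩
    have : y + 1 ≠ 0 := by linarith
    field_simp
    ring

theorem injOn_one_add_div_one_sub : InjOn (fun u : ℝ => (1 + u) / (1 - u)) (Ioo 0 1) := by
  intro u hu v hv huv
  rw [div_eq_div_iff (by linarith [hu.2]) (by linarith [hv.2])] at huv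
  linarith

theorem hasDerivAt_one_add_div_one_sub {u : ℝ} (hu : u ≠ 1) :
    HasDerivAt (fun u : ℝ => (1 + u) / (1 - u)) (2 / (1 - u) ^ 2) u := by
  have h : 1 - u ≠ 0 := sub_ne_zero.2 hu.symm
  exact ((hasDerivAt_id' u).const_add 1).div ((hasDerivAt_id' u).const_sub 1) h
    |>.congr_deriv (by ring)

theorem integral_Ioi_one_sub_one_rpow_mul_add_one_rpow {a b : ℝ} (ha : 0 < a) (hb : 0 < b) :
    ∫ y in Ioi 1, (y - 1) ^ (a - 1) * (y + 1) ^ (-(a + b)) =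
      2 ^ (-b) * (Gamma a * Gamma b / Gamma (a + b)) := by
  rw [← image_Ioo_one_add_div_one_sub, integral_image_eq_integral_abs_deriv_smul measurableSet_Ioo
    (fun u hu => (hasDerivAt_one_add_div_one_sub hu.2.ne).hasDerivWithinAt)
    injOn_one_add_div_one_sub, ← integral_Ioo_rpow_mul_one_sub_rpow ha hb,
    ← integral_const_mul]
  refine setIntegral_congr_fun measurableSet_Ioo fun u ⟨hu0, hu1⟩ => ?_
  have hv : 0 < 1 - u := sub_pos.2 hu1
  have hsplit : ∀ x : ℝ, 0 < x → x ^ (a + b) = x ^ (a - 1) * x ^ (b - 1) * x ^ 2 := fun x hx => by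
    rw [← rpow_two, ← rpow_add hx, ← rpow_add hx]
    ring_nf
  have h2b : (2 : ℝ) ^ b = 2 ^ (b - 1) * 2 := by
    rw [← rpow_add_one two_ne_zero]
    ring_nf
  have hsub : (1 + u) / (1 - u) - 1 = 2 * u / (1 - u) := by field_simp; ring
  have hadd : (1 + u) / (1 - u) + 1 = 2 / (1 - u) := by field_simp; ring
  rw [hsub, hadd, abs_of_pos (by positivity), smul_eq_mul, div_rpow (by positivity) hv.le,
    mul_rpow zero_le_two hu0.le, rpow_neg (by positivity), div_rpow zero_le_two hv.le,
    rpow_neg zero_le_two, hsplit 2 two_pos, hsplit _ hv, h2b]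
  field_simp

theorem integral_Ioi_inv_sq_sub_one {y : ℝ} (hy : 1 < y) :
    ∫ t in Ioi y, (t ^ 2 - 1)⁻¹ = (log (y + 1) - log (y - 1)) / 2 := by
  have hderiv : ∀ t ∈ Ici y,
      HasDerivAt (fun t => (log (t - 1) - log (t + 1)) / 2) (t ^ 2 - 1)⁻¹ t := by
    intro t ht
    have ht1 : 1 < t := hy.trans_le ht
    refine ((((hasDerivAt_id' t).sub_const 1).log (by linarith)).sub
      (((hasDerivAt_id' t).add_const 1).log (by linarith))).div_const 2 |>.congr_deriv ?_
    have h1 : t - 1 ≠ 0 := by linarith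
    have h2 : t + 1 ≠ 0 := by linarith
    have h3 : t ^ 2 - 1 ≠ 0 := by nlinarith
    field_simp
    ring
  have hnonneg : ∀ t ∈ Ioi y, 0 ≤ (t ^ 2 - 1)⁻¹ := fun t ht =>
    inv_nonneg.2 (by nlinarith [hy.trans (mem_Ioi.1 ht)])
  -- `log (t - 1) - log (t + 1) = log ((t + 1) + (-2)) - log (t + 1) → 0`
  have hlim : Tendsto (fun t => (log (t - 1) - log (t + 1)) / 2) atTop (𝓝 0) := by
    have h := ((tendsto_log_comp_add_sub_log (-2)).comp
      (tendsto_atTop_add_const_right _ 1 tendsto_id)).div_const 2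
    rw [zero_div] at h
    refine h.congr fun t => ?_
    simp only [Function.comp_apply, id]
    ring_nf
  rw [integral_Ioi_of_hasDerivAt_of_nonneg' hderiv hnonneg hlim]
  ring

theorem exp_neg_mul_integral_Ioi_inv_sq_sub_one {y : ℝ} (hy : 1 < y) (k : ℝ) :
    exp (-k * ∫ t in Ioi y, (t ^ 2 - 1)⁻¹) = (y - 1) ^ (k / 2) * (y + 1) ^ (-(k / 2)) := by
  rw [integral_Ioi_inv_sq_sub_one hy, rpow_def_of_pos (by linarith),
    rpow_def_of_pos (by linarith), ← exp_add]
  ring_nf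

/-- Explicit evaluation of the external angle sum `𝕀*_{α,m}(1)` of beta* polytopes
(case `λ = 1`, i.e. `β = (d+1)/2`), for `m ≥ 1` and `α > π(m−1)`. -/
theorem I_star_one_eval (m : ℕ) (hm : 1 ≤ m) (α : ℝ) (hα : α > Real.pi * ((m : ℝ) - 1)) :
    (α ^ m / (Nat.factorial m : ℝ)) *
      ∫ y in Set.Ioi (1 : ℝ),
        (Real.Gamma (((m : ℝ) + 1) / 2) / (Real.sqrt Real.pi * Real.Gamma ((m : ℝ) / 2))) *
          (y ^ 2 - 1) ^ (-(((m : ℝ) + 1) / 2)) *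
          Real.exp (-(α / Real.pi) * ∫ t in Set.Ioi y, (t ^ 2 - 1)⁻¹)
      = (α ^ m * Real.Gamma (((m : ℝ) + 1) / 2))
          / ((m : ℝ) * 2 ^ m * Real.sqrt Real.pi * Real.Gamma ((m : ℝ) / 2)) *
          (Real.Gamma (α / (2 * Real.pi) - ((m : ℝ) - 1) / 2)
            / Real.Gamma (α / (2 * Real.pi) + ((m : ℝ) + 1) / 2)) := by
  set c := Gamma (((m : ℝ) + 1) / 2) / (√π * Gamma ((m : ℝ) / 2))
  set a := α / (2 * π) - ((m : ℝ) - 1) / 2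
  have hm₀ : (0 : ℝ) < m := by exact_mod_cast hm
  have ha : 0 < a := by
    have hπ := pi_pos
    rw [sub_pos, lt_div_iff₀ (by positivity)]
    linarith
  have hintegrand : ∀ y ∈ Ioi (1 : ℝ), c * (y ^ 2 - 1) ^ (-(((m : ℝ) + 1) / 2)) *
      exp (-(α / π) * ∫ t in Ioi y, (t ^ 2 - 1)⁻¹) =
        c * ((y - 1) ^ (a - 1) * (y + 1) ^ (-(a + m))) := fun y (hy : 1 < y) => by
    rw [exp_neg_mul_integral_Ioi_inv_sq_sub_one hy, show y ^ 2 - 1 = (y - 1) * (y + 1) by ring,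
      mul_rpow (by linarith) (by linarith),
      show a - 1 = -(((m : ℝ) + 1) / 2) + α / π / 2 by ring,
      show -(a + m) = -(((m : ℝ) + 1) / 2) + -(α / π / 2) by ring,
      rpow_add (by linarith), rpow_add (by linarith)]
    ring
  have hfact : (m.factorial : ℝ) = m * Gamma m := by
    rw [← Gamma_nat_eq_factorial, Gamma_add_one hm₀.ne']
  rw [setIntegral_congr_fun measurableSet_Ioi hintegrand, integral_const_mul,
    integral_Ioi_one_sub_one_rpow_mul_add_one_rpow ha hm₀,
    show a + m = α / (2 * π) + ((m : ℝ) + 1) / 2 by ring, hfact, rpow_neg zero_le_two,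
    rpow_natCast]
  have hΓm := (Gamma_pos_of_pos hm₀).ne'
  have hΓhalf := (Gamma_pos_of_pos (half_pos hm₀)).ne'
  simp only [c]
  field_simp
end

section
/- Let m ∈ ℕ, m ≥ 1, and α > 0. Then (α^m/m!) · ∫_1^∞ c̃_{1,m+1/2} (y²−1)^{−(m+1/2)} · exp{ −(α/2) ∫_y^∞ (t²−1)^{−3/2} dt } dy = √(α e^α / π) · C(2m−1, m) · K_{m−1/2}(α/2), where K_ν(z) = (√π (z/2)^ν / Γ(ν+1/2)) ∫_1^∞ e^{−zt}(t²−1)^{ν−1/2} dt is the modified Bessel function of the second kind and C(2m−1,m) is the binomial coefficient. -/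
open MeasureTheory Real

/-- The modified Bessel function of the second kind, defined for `ν, z > 0` by
`K_ν(z) = (√π (z/2)^ν / Γ(ν+1/2)) ∫_1^∞ e^{−zt}(t²−1)^{ν−1/2} dt`. -/
noncomputable def besselK (ν z : ℝ) : ℝ :=
  Real.sqrt Real.pi * (z / 2) ^ ν / Real.Gamma (ν + 1 / 2) *
    ∫ t in Set.Ioi (1 : ℝ), Real.exp (-z * t) * (t ^ 2 - 1) ^ (ν - 1 / 2)

/-!
The inner integral is `∫_y^∞ (t²−1)^{−3/2} dt = u − 1` with `u = y/√(y²−1)`, and `y ↦ u` is an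
involution of `(1, ∞)` with `du = −(y²−1)^{−3/2} dy` and `u²−1 = (y²−1)⁻¹`. Substituting turns the
outer integral into `e^{α/2} ∫_1^∞ e^{−αu/2} (u²−1)^{m−1} du`, which is the Bessel integral of
`K_{m−1/2}(α/2)`; the constants match by Legendre's duplication formula for `Γ(m) Γ(m+1/2)`.
-/

open Set Filter Topology

/-- The map `cosh s ↦ coth s`. -/
noncomputable def cothArcosh (y : ℝ) : ℝ := y / √(y ^ 2 - 1)

section cothArcosh

variable {y : ℝ}

lemma sq_sub_one_pos (hy : 1 < y) : 0 < y ^ 2 - 1 := by nlinarith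

lemma cothArcosh_sq_sub_one (hy : 1 < y) : cothArcosh y ^ 2 - 1 = (y ^ 2 - 1)⁻¹ := by
  have h := sq_sub_one_pos hy
  rw [cothArcosh, div_pow, sq_sqrt h.le]
  field_simp
  ring

lemma one_lt_cothArcosh (hy : 1 < y) : 1 < cothArcosh y := by
  have h := sq_sub_one_pos hy
  have hs : 0 < √(y ^ 2 - 1) := sqrt_pos.2 h
  rw [cothArcosh, one_lt_div hs, sqrt_lt' (by linarith)]
  linarith

lemma cothArcosh_cothArcosh (hy : 1 < y) : cothArcosh (cothArcosh y) = y := by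
  have hs : 0 < √(y ^ 2 - 1) := sqrt_pos.2 (sq_sub_one_pos hy)
  rw [cothArcosh, cothArcosh_sq_sub_one hy, sqrt_inv, cothArcosh]
  field_simp

lemma hasDerivAt_cothArcosh (hy : 1 < y) :
    HasDerivAt cothArcosh (-(y ^ 2 - 1) ^ (-(3 : ℝ) / 2)) y := by
  have h := sq_sub_one_pos hy
  have hs : 0 < √(y ^ 2 - 1) := sqrt_pos.2 h
  have hsq : HasDerivAt (fun t : ℝ => √(t ^ 2 - 1)) (1 / (2 * √(y ^ 2 - 1)) * (2 * y)) y :=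
    (hasDerivAt_sqrt h.ne').comp y (by simpa using (hasDerivAt_pow 2 y).sub_const 1)
  refine ((hasDerivAt_id y).div hsq hs.ne').congr_deriv ?_
  have hpow : (y ^ 2 - 1) ^ (-(3 : ℝ) / 2) = (√(y ^ 2 - 1) * (y ^ 2 - 1))⁻¹ := by
    rw [show -(3 : ℝ) / 2 = -(1 / 2 + 1) by norm_num, rpow_neg h.le, rpow_add h, rpow_one,
      ← sqrt_eq_rpow]
  rw [hpow, id]
  field_simp
  rw [sq_sqrt h.le]
  ring

lemma tendsto_cothArcosh_atTop : Tendsto cothArcosh atTop (𝓝 1) := by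
  have hlim : Tendsto (fun y : ℝ => √(1 + (y ^ 2 - 1)⁻¹)) atTop (𝓝 1) := by
    have h : Tendsto (fun y : ℝ => y ^ 2 - 1) atTop atTop :=
      tendsto_atTop_add_const_right _ _ (tendsto_pow_atTop two_ne_zero)
    have h1 : Tendsto (fun y : ℝ => 1 + (y ^ 2 - 1)⁻¹) atTop (𝓝 1) := by
      simpa using (tendsto_const_nhds (x := (1 : ℝ))).add h.inv_tendsto_atTop
    simpa only [sqrt_one] using h1.sqrt
  refine hlim.congr' ?_
  filter_upwards [eventually_gt_atTop 1] with y hy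
  have h := sq_sub_one_pos hy
  rw [cothArcosh, show 1 + (y ^ 2 - 1)⁻¹ = y ^ 2 / (y ^ 2 - 1) by field_simp; ring,
    sqrt_div' _ h.le, sqrt_sq (by linarith)]

lemma integral_Ioi_sq_sub_one_rpow_neg_three_halves (hy : 1 < y) :
    ∫ t in Ioi y, (t ^ 2 - 1) ^ (-(3 : ℝ) / 2) = cothArcosh y - 1 := by
  have := integral_Ioi_of_hasDerivAt_of_nonpos
    (hasDerivAt_cothArcosh hy).continuousAt.continuousWithinAt
    (fun t ht => hasDerivAt_cothArcosh (hy.trans ht))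
    (fun t ht => neg_nonpos.2 (rpow_pos_of_pos (sq_sub_one_pos (hy.trans ht)) _).le)
    tendsto_cothArcosh_atTop
  rw [integral_neg] at this
  linarith

lemma image_cothArcosh_Ioi : cothArcosh '' Ioi 1 = Ioi 1 :=
  Subset.antisymm (fun _ ⟨_, hy, hu⟩ => hu ▸ one_lt_cothArcosh hy)
    fun u hu => ⟨cothArcosh u, one_lt_cothArcosh hu, cothArcosh_cothArcosh hu⟩

lemma injOn_cothArcosh : InjOn cothArcosh (Ioi 1) := fun a ha b hb hab => by
  rw [← cothArcosh_cothArcosh ha, ← cothArcosh_cothArcosh hb, hab]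

lemma integral_Ioi_one_eq_integral_comp_cothArcosh (f : ℝ → ℝ) :
    ∫ u in Ioi 1, f u = ∫ y in Ioi 1, (y ^ 2 - 1) ^ (-(3 : ℝ) / 2) * f (cothArcosh y) := by
  conv_lhs => rw [← image_cothArcosh_Ioi]
  rw [integral_image_eq_integral_abs_deriv_smul measurableSet_Ioi
    (fun y hy => (hasDerivAt_cothArcosh hy).hasDerivWithinAt) injOn_cothArcosh]
  refine setIntegral_congr_fun measurableSet_Ioi fun y hy => ?_
  rw [abs_neg, abs_of_pos (rpow_pos_of_pos (sq_sub_one_pos hy) _), smul_eq_mul]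

end cothArcosh

lemma integral_sq_sub_one_rpow_mul_exp_integral (ν z : ℝ) :
    ∫ y in Ioi 1,
        (y ^ 2 - 1) ^ (-(ν + 1)) * exp (-z * ∫ t in Ioi y, (t ^ 2 - 1) ^ (-(3 : ℝ) / 2))
      = exp z * ∫ t in Ioi 1, exp (-z * t) * (t ^ 2 - 1) ^ (ν - 1 / 2) := by
  rw [integral_Ioi_one_eq_integral_comp_cothArcosh
    (fun t => exp (-z * t) * (t ^ 2 - 1) ^ (ν - 1 / 2)), ← integral_const_mul]
  refine setIntegral_congr_fun measurableSet_Ioi fun y (hy : 1 < y) => ?_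
  have h := sq_sub_one_pos hy
  rw [integral_Ioi_sq_sub_one_rpow_neg_three_halves hy, cothArcosh_sq_sub_one hy, inv_rpow h.le,
    ← rpow_neg h.le, show -z * (cothArcosh y - 1) = -z * cothArcosh y + z by ring, exp_add,
    show -(ν + 1) = -(3 : ℝ) / 2 + -(ν - 1 / 2) by ring, rpow_add h]
  ring

lemma Gamma_nat_add_one_add_half_mul (k : ℕ) :
    Gamma (k + 1 + 1 / 2) * (k.factorial * 2 ^ (2 * k + 1)) = (2 * k + 1).factorial * √π := by
  have hdup := Gamma_mul_Gamma_add_half (k + 1)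
  rw [show 2 * ((k : ℝ) + 1) = (2 * k + 1 : ℕ) + 1 by push_cast; ring,
    show (1 : ℝ) - ((2 * k + 1 : ℕ) + 1) = -((2 * k + 1 : ℕ) : ℝ) by ring,
    rpow_neg two_pos.le, rpow_natCast, Gamma_nat_eq_factorial, Gamma_nat_eq_factorial] at hdup
  calc _ = k.factorial * Gamma (k + 1 + 1 / 2) * 2 ^ (2 * k + 1) := by ring
    _ = _ := by rw [hdup]; field_simp

lemma pow_div_factorial_mul_Gamma_add_half {m : ℕ} (hm : 1 ≤ m) {α : ℝ} (hα : 0 < α) :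
    α ^ m / m.factorial * (Gamma (m + 1 / 2) / (√π * Gamma m)) * exp (α / 2)
      = √(α * exp α / π) * (2 * m - 1).choose m *
          (√π * (α / 2 / 2) ^ ((m : ℝ) - 1 / 2) / Gamma m) := by
  obtain ⟨k, rfl⟩ := Nat.exists_eq_add_of_le' hm
  have hsqrt : √(α * exp α / π) = √α * exp (α / 2) / √π := by
    rw [sqrt_div' _ pi_pos.le, sqrt_mul hα.le, ← exp_half]
  have hrpow : (α / 2 / 2) ^ ((k : ℝ) + 1 - 1 / 2) = α ^ k * √α / 2 ^ (2 * k + 1) := by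
    rw [show (k : ℝ) + 1 - 1 / 2 = k + 1 / 2 by ring, rpow_add (by positivity), rpow_natCast,
      ← sqrt_eq_rpow, show α / 2 / 2 = α / 2 ^ 2 by ring, sqrt_div' _ (by positivity),
      sqrt_sq two_pos.le, div_pow, ← pow_mul]
    ring
  have hchoose : ((2 * (k + 1) - 1).choose (k + 1) : ℝ)
      = (2 * k + 1).factorial / ((k + 1).factorial * k.factorial) := by
    rw [show 2 * (k + 1) - 1 = 2 * k + 1 by omega,
      Nat.cast_choose ℝ (by omega : k + 1 ≤ 2 * k + 1), show 2 * k + 1 - (k + 1) = k by omega]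
  have hΓ := eq_div_of_mul_eq (by positivity) (Gamma_nat_add_one_add_half_mul k)
  rw [hsqrt, hchoose, Nat.cast_add_one, hrpow, Gamma_nat_eq_factorial, hΓ]
  field_simp
  rw [sq_sqrt hα.le]
  ring

/-- Evaluation of the external angle sum `𝕀*_{α,m}(2)` of beta* polytopes
(case `λ = 2`, i.e. `β = (d+2)/2`) in terms of the modified Bessel function of the
second kind: for `m ≥ 1` and `α > 0`. Here `c̃_{1,m+1/2} = Γ(m+1/2)/(√π Γ(m))`. -/
theorem I_star_two_eval (m : ℕ) (hm : 1 ≤ m) (α : ℝ) (hα : 0 < α) :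
    (α ^ m / (Nat.factorial m : ℝ)) *
      ∫ y in Set.Ioi (1 : ℝ),
        (Real.Gamma ((m : ℝ) + 1 / 2) / (Real.sqrt Real.pi * Real.Gamma (m : ℝ))) *
          (y ^ 2 - 1) ^ (-((m : ℝ) + 1 / 2)) *
          Real.exp (-(α / 2) * ∫ t in Set.Ioi y, (t ^ 2 - 1) ^ (-(3 : ℝ) / 2))
      = Real.sqrt (α * Real.exp α / Real.pi) * (Nat.choose (2 * m - 1) m : ℝ) *
          besselK ((m : ℝ) - 1 / 2) (α / 2) := by
  have hbessel := integral_sq_sub_one_rpow_mul_exp_integral ((m : ℝ) - 1 / 2) (α / 2)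
  rw [show -((m : ℝ) - 1 / 2 + 1) = -((m : ℝ) + 1 / 2) by ring] at hbessel
  simp_rw [mul_assoc (Gamma _ / _), integral_const_mul, hbessel, besselK, sub_add_cancel]
  generalize ∫ t in Ioi (1 : ℝ), (_ : ℝ) = J
  linear_combination J * pow_div_factorial_mul_Gamma_add_half hm hα
end

section
/- For α > 0, (3α²/8) ∫_0^∞ (sinh φ)^{−4} exp{ −(α/2)(coth φ − 1) } dφ = 3(1 + 2/α). In particular ∫_φ^∞ (sinh θ)^{−2} dθ = coth φ − 1 for every φ > 0. -/
/-!
Substituting `u = coth φ - 1`, which decreases from `∞` to `0` on `(0, ∞)` with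
`du = -(sinh φ)⁻² dφ` and `u² + 2u = coth² φ - 1 = (sinh φ)⁻²`, turns the integral, with
`c = α/2`, into `∫_0^∞ (u² + 2u) e^{-cu} du = 2/c² + 2/c³`. Both integrals are computed from
explicit antiderivatives.
-/

open MeasureTheory Real Filter Set Topology

lemma hasDerivAt_cosh_div_sinh {x : ℝ} (hx : x ≠ 0) :
    HasDerivAt (fun θ ↦ cosh θ / sinh θ) (-sinh x ^ (-2 : ℤ)) x := by
  have hs : sinh x ≠ 0 := sinh_ne_zero.mpr hx
  refine ((hasDerivAt_cosh x).div (hasDerivAt_sinh x) hs).congr_deriv ?_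
  rw [zpow_neg, zpow_ofNat]
  field_simp
  linear_combination -cosh_sq_sub_sinh_sq x

lemma tendsto_cosh_div_sinh_atTop : Tendsto (fun x ↦ cosh x / sinh x) atTop (𝓝 1) := by
  have hsinh : Tendsto sinh atTop atTop :=
    tendsto_atTop_mono' atTop ((eventually_ge_atTop 0).mono fun x hx ↦ self_le_sinh_iff.mpr hx)
      tendsto_id
  have h : Tendsto (fun x ↦ 1 + exp (-x) / sinh x) atTop (𝓝 (1 + 0)) :=
    tendsto_const_nhds.add (tendsto_exp_neg_atTop_nhds_zero.div_atTop hsinh)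
  rw [add_zero] at h
  refine h.congr' ((eventually_gt_atTop 0).mono fun x hx ↦ ?_)
  have hs : sinh x ≠ 0 := (sinh_pos_iff.mpr hx).ne'
  field_simp
  linear_combination -cosh_sub_sinh x

lemma tendsto_cosh_div_sinh_nhdsGT_zero :
    Tendsto (fun x ↦ cosh x / sinh x) (𝓝[>] 0) atTop := by
  have hsinh : Tendsto sinh (𝓝[>] 0) (𝓝[>] 0) :=
    tendsto_nhdsWithin_of_tendsto_nhds_of_eventually_within _
      (by simpa using continuous_sinh.continuousAt.tendsto.mono_left (nhdsWithin_le_nhds (s := Ioi 0) (a := 0)))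
      (eventually_nhdsWithin_of_forall fun x hx ↦ sinh_pos_iff.mpr hx)
  have hcosh : Tendsto cosh (𝓝[>] 0) (𝓝 1) := by
    simpa using continuous_cosh.continuousAt.tendsto.mono_left (nhdsWithin_le_nhds (s := Ioi 0) (a := 0))
  simpa [div_eq_mul_inv] using hcosh.pos_mul_atTop one_pos (tendsto_inv_nhdsGT_zero.comp hsinh)

lemma one_lt_cosh_div_sinh {x : ℝ} (hx : 0 < x) : 1 < cosh x / sinh x := by
  rw [one_lt_div (sinh_pos_iff.mpr hx)]
  exact sinh_lt_cosh x

lemma sq_add_two_mul_cosh_div_sinh_sub_one {x : ℝ} (hx : x ≠ 0) :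
    (cosh x / sinh x - 1) ^ 2 + 2 * (cosh x / sinh x - 1) = sinh x ^ (-2 : ℤ) := by
  have hs : sinh x ≠ 0 := sinh_ne_zero.mpr hx
  rw [zpow_neg, zpow_ofNat]
  field_simp
  linear_combination cosh_sq_sub_sinh_sq x

lemma integral_Ioi_sinh_zpow_neg_two {φ : ℝ} (hφ : 0 < φ) :
    ∫ θ in Ioi φ, sinh θ ^ (-2 : ℤ) = cosh φ / sinh φ - 1 := by
  have hderiv : ∀ x ∈ Ici φ, HasDerivAt (fun θ ↦ -(cosh θ / sinh θ)) (sinh x ^ (-2 : ℤ)) x :=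
    fun x hx ↦ by
      simpa using (hasDerivAt_cosh_div_sinh (hφ.trans_le hx).ne').fun_neg
  have hnonneg : ∀ x ∈ Ioi φ, 0 ≤ sinh x ^ (-2 : ℤ) := fun x hx ↦
    have : 0 < sinh x := sinh_pos_iff.mpr (hφ.trans hx)
    by positivity
  rw [integral_Ioi_of_hasDerivAt_of_nonneg' hderiv hnonneg tendsto_cosh_div_sinh_atTop.neg]
  ring

lemma integral_Ioi_sinh_zpow_neg_two_mul_comp_cosh_div_sinh_sub_one {g G : ℝ → ℝ}
    (hG : ∀ u ∈ Ici (0 : ℝ), HasDerivAt G (-g u) u) (hg : ∀ u ∈ Ioi (0 : ℝ), 0 ≤ g u)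
    (hG_atTop : Tendsto G atTop (𝓝 0)) :
    ∫ φ in Ioi 0, sinh φ ^ (-2 : ℤ) * g (cosh φ / sinh φ - 1) = G 0 := by
  set F : ℝ → ℝ := fun φ ↦ if 0 < φ then G (cosh φ / sinh φ - 1) else 0
  have hF0 : F 0 = 0 := if_neg (lt_irrefl 0)
  have hu_pos : ∀ φ ∈ Ioi (0 : ℝ), 0 < cosh φ / sinh φ - 1 := fun φ hφ ↦
    sub_pos.mpr (one_lt_cosh_div_sinh hφ)
  have hF_zero : ContinuousWithinAt F (Ici 0) 0 := by
    rw [← continuousWithinAt_Ioi_iff_Ici, ContinuousWithinAt, hF0]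
    have hu : Tendsto (fun φ ↦ cosh φ / sinh φ - 1) (𝓝[>] 0) atTop :=
      tendsto_atTop_add_const_right _ (-1) tendsto_cosh_div_sinh_nhdsGT_zero
    exact (hG_atTop.comp hu).congr' (eventually_nhdsWithin_of_forall fun φ hφ ↦ (if_pos hφ).symm)
  have hF_deriv : ∀ φ ∈ Ioi (0 : ℝ),
      HasDerivAt F (sinh φ ^ (-2 : ℤ) * g (cosh φ / sinh φ - 1)) φ := fun φ hφ ↦ by
    have hcomp := (hG _ (hu_pos φ hφ).le).comp φ
      ((hasDerivAt_cosh_div_sinh (ne_of_gt hφ)).sub_const 1)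
    refine (hcomp.congr_of_eventuallyEq ?_).congr_deriv (by ring)
    filter_upwards [Ioi_mem_nhds hφ] with ψ hψ using if_pos hψ
  have hF_nonneg : ∀ φ ∈ Ioi (0 : ℝ), 0 ≤ sinh φ ^ (-2 : ℤ) * g (cosh φ / sinh φ - 1) :=
    fun φ hφ ↦ mul_nonneg (zpow_nonneg (sinh_pos_iff.mpr hφ).le _) (hg _ (hu_pos φ hφ))
  have hF_atTop : Tendsto F atTop (𝓝 (G 0)) := by
    have hu : Tendsto (fun φ ↦ cosh φ / sinh φ - 1) atTop (𝓝 0) := by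
      simpa using tendsto_cosh_div_sinh_atTop.sub_const 1
    exact ((hG 0 self_mem_Ici).continuousAt.tendsto.comp hu).congr'
      ((eventually_gt_atTop 0).mono fun φ hφ ↦ (if_pos hφ).symm)
  rw [integral_Ioi_of_hasDerivAt_of_nonneg hF_zero hF_deriv hF_nonneg hF_atTop, hF0, sub_zero]

section QuadExp

variable {c : ℝ}

/-- The tail integral `∫_u^∞ (t² + 2t) e^{-ct} dt`, obtained by integrating by parts twice. -/
noncomputable def quadExpTail (c u : ℝ) : ℝ :=
  exp (-c * u) * ((u ^ 2 + 2 * u) / c + (2 * u + 2) / c ^ 2 + 2 / c ^ 3)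

lemma hasDerivAt_quadExpTail (hc : c ≠ 0) (u : ℝ) :
    HasDerivAt (quadExpTail c) (-((u ^ 2 + 2 * u) * exp (-c * u))) u := by
  have hexp : HasDerivAt (fun v ↦ exp (-c * v)) (exp (-c * u) * -c) u := by
    simpa using ((hasDerivAt_id u).const_mul (-c)).exp
  have hpoly := ((((hasDerivAt_pow 2 u).add ((hasDerivAt_id u).const_mul 2)).div_const c).add
    ((((hasDerivAt_id u).const_mul 2).add_const 2).div_const (c ^ 2))).add_const (2 / c ^ 3)
  refine (hexp.mul hpoly).congr_deriv ?_
  simp only [Pi.add_apply, id_eq]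
  field_simp
  ring

lemma tendsto_quadExpTail_atTop (hc : 0 < c) : Tendsto (quadExpTail c) atTop (𝓝 0) := by
  have hpow : ∀ n : ℕ, Tendsto (fun u ↦ u ^ n * exp (-c * u)) atTop (𝓝 0) := fun n ↦
    (tendsto_rpow_mul_exp_neg_mul_atTop_nhds_zero n c hc).congr fun u ↦ by rw [rpow_natCast]
  have h := ((hpow 2).mul_const (1 / c)).add
    (((hpow 1).mul_const (2 / c + 2 / c ^ 2)).add ((hpow 0).mul_const (2 / c ^ 2 + 2 / c ^ 3)))
  simp only [zero_mul, add_zero] at h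
  refine h.congr fun u ↦ ?_
  simp only [quadExpTail]
  ring

lemma quadExpTail_zero (c : ℝ) : quadExpTail c 0 = 2 / c ^ 2 + 2 / c ^ 3 := by
  simp [quadExpTail]

end QuadExp

lemma integral_Ioi_sinh_zpow_neg_four_mul_exp {c : ℝ} (hc : 0 < c) :
    ∫ φ in Ioi 0, sinh φ ^ (-4 : ℤ) * exp (-c * (cosh φ / sinh φ - 1)) = 2 / c ^ 2 + 2 / c ^ 3 := by
  have hg : ∀ u ∈ Ioi (0 : ℝ), 0 ≤ (u ^ 2 + 2 * u) * exp (-c * u) := fun u hu ↦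
    have : 0 < u := hu
    by positivity
  rw [← quadExpTail_zero, ← integral_Ioi_sinh_zpow_neg_two_mul_comp_cosh_div_sinh_sub_one
    (fun u _ ↦ hasDerivAt_quadExpTail hc.ne' u) hg (tendsto_quadExpTail_atTop hc)]
  refine setIntegral_congr_fun measurableSet_Ioi fun φ hφ ↦ ?_
  rw [sq_add_two_mul_cosh_div_sinh_sub_one (ne_of_gt hφ), ← mul_assoc, ← zpow_add₀
    (sinh_pos_iff.mpr hφ).ne']
  norm_num

/-- The external angle sum `𝕀*_{α,2}(2)` of planar beta* polytopes with `β = d = 2`: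
`(3α²/8) ∫_0^∞ (sinh φ)^{−4} exp{−(α/2)(coth φ − 1)} dφ = 3(1 + 2/α)`; in particular
`∫_φ^∞ (sinh θ)^{−2} dθ = coth φ − 1` for every `φ > 0`. -/
theorem I_star_alpha_two_planar (α : ℝ) (hα : 0 < α) :
    (3 * α ^ 2 / 8) * ∫ φ in Set.Ioi (0 : ℝ),
        (Real.sinh φ) ^ (-4 : ℤ) *
          Real.exp (-(α / 2) * (Real.cosh φ / Real.sinh φ - 1))
      = 3 * (1 + 2 / α) ∧
    ∀ φ : ℝ, 0 < φ →
      ∫ θ in Set.Ioi φ, (Real.sinh θ) ^ (-2 : ℤ) = Real.cosh φ / Real.sinh φ - 1 := by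
  refine ⟨?_, fun φ hφ ↦ integral_Ioi_sinh_zpow_neg_two hφ⟩
  rw [integral_Ioi_sinh_zpow_neg_four_mul_exp (half_pos hα)]
  field_simp
  ring
end
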